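/- Let p : ℝ^d → (0,∞) be C² with ∫_{ℝ^d} p dx = 1, let h : ℝ^d → ℝ be continuous with ∫ h² p dx < ∞, and set ĥ := ∫ h p dx. Let K : ℝ^d → ℝ^d be C² with ∑_i ∂(pK_i)/∂x_i = −(h − ĥ)p everywhere, and let u : ℝ^d → ℝ^d be C¹ such that for some constant C₁ and every x: ∑_i ∂(pu_i)/∂x_i = (1/2)h²p + (1/2)∑_{i,j}K_iK_j ∂²p/∂x_i∂x_j − (p/2)(∑_i K_i ∂(log p)/∂x_i)² + p∑_{i,j}K_i(∂K_j/∂x_i)(∂(log p)/∂x_j) + p∑_j K_j ∂/∂x_j(∑_i ∂K_i/∂x_i) + (p/2)∑_{i,j}(∂K_j/∂x_i)(∂K_i/∂x_j) + C₁ p. Assume moreover that ∑_i ∂(pu_i)/∂x_i and ∑_{i,j} ∂²(pK_iK_j)/∂x_i∂x_j are Lebesgue integrable on ℝ^d with ∫ ∑_i ∂(pu_i)/∂x_i dx = 0 and ∫ ∑_{i,j} ∂²(pK_iK_j)/∂x_i∂x_j dx = 0. Then C₁ = −ĥ²/2 and, for every x, ∑_i ∂(pu_i)/∂x_i = (h −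 ĥ) ĥ p + (1/2) ∑_{i,j=1}^d ∂²(p K_i K_j)/∂x_i∂x_j. -/

import Mathlib

/-!
Expanding `∑ᵢⱼ ∂ᵢ∂ⱼ(p Kᵢ Kⱼ)` by the Leibniz rule and replacing `∂ log p` by `∂p / p`, the hypothesis
on `div(pu)` differs from `(1/2) ∑ᵢⱼ ∂ᵢ∂ⱼ(p Kᵢ Kⱼ)` by `(1/2) h² p - (K·∇p + p div K)² / (2p) + C₁ p`,
a completed square. The gain equation `K·∇p + p div K = -(h - ĥ) p` turns this into the pointwise
identity `div(pu) = (h - ĥ) ĥ p + (1/2) ∑ᵢⱼ ∂ᵢ∂ⱼ(p Kᵢ Kⱼ) + (C₁ + ĥ²/2) p`. Integrating it, the first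
two terms have integral zero and `∫ p = 1`, so `C₁ + ĥ²/2 = 0`.
-/

open MeasureTheory

/-- Partial derivative `∂f/∂x_i` of a scalar function on `ℝ^d`. -/
noncomputable def pd {d : ℕ} (i : Fin d) (f : (Fin d → ℝ) → ℝ) (x : Fin d → ℝ) : ℝ :=
  fderiv ℝ f x (Pi.single i 1)

section PartialDerivatives

variable {d : ℕ} {f g : (Fin d → ℝ) → ℝ} {x : Fin d → ℝ}

lemma pd_add (i : Fin d) (hf : DifferentiableAt ℝ f x) (hg : DifferentiableAt ℝ g x) :
    pd i (fun y => f y + g y) x = pd i f x + pd i g x := by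
  simp [pd, fderiv_fun_add hf hg]

lemma pd_mul (i : Fin d) (hf : DifferentiableAt ℝ f x) (hg : DifferentiableAt ℝ g x) :
    pd i (fun y => f y * g y) x = pd i f x * g x + f x * pd i g x := by
  simp only [pd, fderiv_fun_mul hf hg, add_apply, smul_apply, smul_eq_mul]
  ring

lemma pd_sum {ι : Type*} (s : Finset ι) (i : Fin d) {F : ι → (Fin d → ℝ) → ℝ}
    (hF : ∀ k ∈ s, DifferentiableAt ℝ (F k) x) :
    pd i (fun y => ∑ k ∈ s, F k y) x = ∑ k ∈ s, pd i (F k) x := by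
  simp [pd, fderiv_fun_sum hF]

lemma pd_log (i : Fin d) (hf : DifferentiableAt ℝ f x) (hfx : f x ≠ 0) :
    pd i (fun y => Real.log (f y)) x = pd i f x / f x := by
  rw [pd, pd, (hf.hasFDerivAt.log hfx).fderiv]
  simp [div_eq_inv_mul]

lemma contDiff_pd {m n : WithTop ℕ∞} (i : Fin d) (hf : ContDiff ℝ n f) (hmn : m + 1 ≤ n) :
    ContDiff ℝ m (pd i f) :=
  (ContinuousLinearMap.apply ℝ ℝ (Pi.single i 1 : Fin d → ℝ)).contDiff.comp
    (hf.fderiv_right hmn)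

lemma differentiable_pd (i : Fin d) (hf : ContDiff ℝ 2 f) : Differentiable ℝ (pd i f) :=
  (contDiff_pd i hf le_rfl).differentiable one_ne_zero

lemma pd_pd_eq_fderiv_fderiv (i j : Fin d) (hf : ContDiff ℝ 2 f) (x : Fin d → ℝ) :
    pd i (pd j f) x = fderiv ℝ (fderiv ℝ f) x (Pi.single i 1) (Pi.single j 1) := by
  have hdf : DifferentiableAt ℝ (fderiv ℝ f) x :=
    (hf.fderiv_right (m := 1) le_rfl).differentiable one_ne_zero x
  change fderiv ℝ (fun y => fderiv ℝ f y (Pi.single j 1)) x (Pi.single i 1) = _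
  simp [fderiv_clm_apply hdf (differentiableAt_const _)]

lemma pd_comm (i j : Fin d) (hf : ContDiff ℝ 2 f) (x : Fin d → ℝ) :
    pd i (pd j f) x = pd j (pd i f) x := by
  rw [pd_pd_eq_fderiv_fderiv i j hf, pd_pd_eq_fderiv_fderiv j i hf,
    (hf.contDiffAt.isSymmSndFDerivAt (by simp [minSmoothness_of_isRCLikeNormedField])).eq]

lemma pd_pd_mul (i j : Fin d) (hf : ContDiff ℝ 2 f) (hg : ContDiff ℝ 2 g) (x : Fin d → ℝ) :
    pd i (pd j (fun y => f y * g y)) x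
      = pd i (pd j f) x * g x + pd j f x * pd i g x + pd i f x * pd j g x
        + f x * pd i (pd j g) x := by
  have hf1 := hf.differentiable two_ne_zero
  have hg1 := hg.differentiable two_ne_zero
  have hfg : pd j (fun y => f y * g y) = fun y => pd j f y * g y + f y * pd j g y :=
    funext fun y => pd_mul j (hf1 y) (hg1 y)
  rw [hfg, pd_add (f := fun y => pd j f y * g y) (g := fun y => f y * pd j g y) i
      ((differentiable_pd j hf x).mul (hg1 x)) ((hf1 x).mul (differentiable_pd j hg x)),
    pd_mul i (differentiable_pd j hf x) (hg1 x), pd_mul i (hf1 x) (differentiable_pd j hg x)]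
  ring

end PartialDerivatives

lemma sum_sum_eq_of_add_swap_eq {ι R : Type*} [Fintype ι] [Field R] [CharZero R]
    {F G : ι → ι → R} (h : ∀ i j, F i j + F j i = G i j + G j i) :
    ∑ i, ∑ j, F i j = ∑ i, ∑ j, G i j := by
  have symmetrize : ∀ H : ι → ι → R, 2 * ∑ i, ∑ j, H i j = ∑ i, ∑ j, (H i j + H j i) := by
    intro H
    rw [two_mul]
    nth_rewrite 2 [Finset.sum_comm]
    simp only [Finset.sum_add_distrib]
  apply mul_left_cancel₀ (two_ne_zero (α := R))
  simp only [symmetrize, h]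

section DoubleDivergence

variable {d : ℕ} {p : (Fin d → ℝ) → ℝ} {K : (Fin d → ℝ) → (Fin d → ℝ)}

lemma sum_sum_pd_pd_mul_mul (hp : ContDiff ℝ 2 p) (hK : ContDiff ℝ 2 K) (x : Fin d → ℝ) :
    ∑ i, ∑ j, pd i (pd j (fun y => p y * K y i * K y j)) x
      = ∑ i, ∑ j, K x i * K x j * pd i (pd j p) x
        + 2 * (∑ i, pd i (fun y => K y i) x) * (∑ i, K x i * pd i p x)
        + 2 * ∑ i, ∑ j, K x i * pd i (fun y => K y j) x * pd j p x
        + 2 * p x * ∑ j, K x j * pd j (fun y => ∑ i, pd i (fun z => K z i) y) x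
        + p x * ∑ i, ∑ j, pd i (fun y => K y j) x * pd j (fun y => K y i) x
        + p x * (∑ i, pd i (fun y => K y i) x) ^ 2 := by
  have hKi : ∀ i, ContDiff ℝ 2 (fun y => K y i) := contDiff_pi.mp hK
  have pd_pK : ∀ i k,
      pd i (fun y => p y * K y k) x = pd i p x * K x k + p x * pd i (fun y => K y k) x :=
    fun i k => pd_mul i (hp.differentiable two_ne_zero x) ((hKi k).differentiable two_ne_zero x)
  have pd_pd_pK : ∀ i j k, pd i (pd j (fun y => p y * K y k)) x = _ :=
    fun i j k => pd_pd_mul i j hp (hKi k) x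
  have pd_pd_pKK : ∀ i j k l, pd i (pd j (fun y => p y * K y k * K y l)) x = _ :=
    fun i j k l => pd_pd_mul i j (hp.mul (hKi k)) (hKi l) x
  have pd_divK : ∀ j, pd j (fun y => ∑ i, pd i (fun z => K z i) y) x
      = ∑ i, pd j (pd i (fun z => K z i)) x :=
    fun j => pd_sum _ j fun i _ => differentiable_pd i (hKi i) x
  simp only [pd_divK, Finset.mul_sum, Finset.sum_mul, sq, ← Finset.sum_add_distrib]
  refine sum_sum_eq_of_add_swap_eq fun i j => ?_
  simp only [pd_pd_pKK, pd_pd_pK, pd_pK]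
  rw [pd_comm i j (hKi i), pd_comm j i (hKi j)]
  ring

end DoubleDivergence

section ControlEquation

variable {d : ℕ} {p h : (Fin d → ℝ) → ℝ} {K u : (Fin d → ℝ) → (Fin d → ℝ)}

lemma sum_pd_mul_apply {x : Fin d → ℝ} (hp : DifferentiableAt ℝ p x)
    (hK : ∀ i, DifferentiableAt ℝ (fun y => K y i) x) :
    ∑ i, pd i (fun y => p y * K y i) x
      = ∑ i, K x i * pd i p x + p x * ∑ i, pd i (fun y => K y i) x := by
  simp only [pd_mul _ hp (hK _), Finset.mul_sum, ← Finset.sum_add_distrib]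
  exact Finset.sum_congr rfl fun i _ => by ring

lemma sum_pd_mul_eq_of_gain_eq (hp : ContDiff ℝ 2 p) (hK : ContDiff ℝ 2 K) {x : Fin d → ℝ}
    {hhat C₁ : ℝ} (hpx : p x ≠ 0)
    (hgain : ∑ i, pd i (fun y => p y * K y i) x = -(h x - hhat) * p x)
    (hu : ∑ i, pd i (fun y => p y * u y i) x
        = (1 / 2) * (h x) ^ 2 * p x
          + (1 / 2) * ∑ i, ∑ j, K x i * K x j * pd i (pd j p) x
          - (p x / 2) * (∑ i, K x i * pd i (fun y => Real.log (p y)) x) ^ 2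
          + p x * ∑ i, ∑ j, K x i * pd i (fun y => K y j) x * pd j (fun y => Real.log (p y)) x
          + p x * ∑ j, K x j * pd j (fun y => ∑ i, pd i (fun z => K z i) y) x
          + (p x / 2) * ∑ i, ∑ j, pd i (fun y => K y j) x * pd j (fun y => K y i) x
          + C₁ * p x) :
    ∑ i, pd i (fun y => p y * u y i) x
      = (h x - hhat) * hhat * p x
        + (1 / 2) * ∑ i, ∑ j, pd i (pd j (fun y => p y * K y i * K y j)) x
        + (C₁ + hhat ^ 2 / 2) * p x := by
  have hp1 := hp.differentiable two_ne_zero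
  have hK1 : ∀ i, Differentiable ℝ (fun y => K y i) :=
    fun i => (contDiff_pi.mp hK i).differentiable two_ne_zero
  rw [sum_pd_mul_apply (hp1 x) (fun i => hK1 i x)] at hgain
  have hlog : ∀ i, pd i (fun y => Real.log (p y)) x = pd i p x / p x :=
    fun i => pd_log i (hp1 x) hpx
  have hK_dlog : (∑ i, K x i * pd i p x) / p x = -(h x - hhat) - ∑ i, pd i (fun y => K y i) x := by
    field_simp
    linear_combination hgain
  simp only [hlog, mul_div_assoc', ← Finset.sum_div, hK_dlog] at hu
  rw [hu, mul_div_cancel_left₀ _ hpx, sum_sum_pd_pd_mul_mul hp hK x]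
  linear_combination (-∑ i, pd i (fun y => K y i) x) * hgain

end ControlEquation

section Integrals

variable {α : Type*} [MeasurableSpace α] {μ : Measure α} {p h : α → ℝ}

lemma integrable_mul_of_integrable_sq_mul (hp : Integrable p μ) (hp0 : ∀ x, 0 ≤ p x)
    (hhp : AEStronglyMeasurable (fun x => h x * p x) μ)
    (hh2 : Integrable (fun x => h x ^ 2 * p x) μ) :
    Integrable (fun x => h x * p x) μ := by
  refine (hh2.add hp).mono' hhp (ae_of_all _ fun x => ?_)
  have habs : |h x| ≤ h x ^ 2 + 1 := by nlinarith [sq_abs (h x), sq_nonneg (|h x| - 1)]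
  calc ‖h x * p x‖ = |h x| * p x := by rw [Real.norm_eq_abs, abs_mul, abs_of_nonneg (hp0 x)]
    _ ≤ (h x ^ 2 + 1) * p x := mul_le_mul_of_nonneg_right habs (hp0 x)
    _ = h x ^ 2 * p x + p x := by ring

lemma integral_sub_integral_mul_mul_eq_zero (hp : ∫ x, p x ∂μ = 1)
    (hhp : Integrable (fun x => h x * p x) μ) :
    ∫ x, (h x - ∫ y, h y * p y ∂μ) * p x ∂μ = 0 := by
  have hpInt : Integrable p μ := .of_integral_ne_zero (by simp [hp])
  simp only [sub_mul]
  rw [integral_sub hhp (hpInt.const_mul _), integral_const_mul, hp, mul_one, sub_self]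

end Integrals

theorem stmt7_general {d : ℕ}
    (p : (Fin d → ℝ) → ℝ) (hp : ContDiff ℝ 2 p) (hppos : ∀ x, 0 < p x)
    (hpint : ∫ x, p x = 1)
    (h : (Fin d → ℝ) → ℝ) (hh : Continuous h)
    (hh2 : Integrable (fun x => (h x) ^ 2 * p x))
    (hhat : ℝ) (hhat_def : hhat = ∫ x, h x * p x)
    (K : (Fin d → ℝ) → (Fin d → ℝ)) (hK : ContDiff ℝ 2 K)
    (hKeq : ∀ x : Fin d → ℝ,
      (∑ i, pd i (fun y => p y * K y i) x) = -(h x - hhat) * p x)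
    (u : (Fin d → ℝ) → (Fin d → ℝ))
    (C₁ : ℝ)
    (hueq : ∀ x : Fin d → ℝ,
      (∑ i, pd i (fun y => p y * u y i) x)
        = (1 / 2) * (h x) ^ 2 * p x
          + (1 / 2) * ∑ i, ∑ j, K x i * K x j * pd i (pd j p) x
          - (p x / 2) * (∑ i, K x i * pd i (fun y => Real.log (p y)) x) ^ 2
          + p x * ∑ i, ∑ j, K x i * pd i (fun y => K y j) x * pd j (fun y => Real.log (p y)) x
          + p x * ∑ j, K x j * pd j (fun y => ∑ i, pd i (fun z => K z i) y) x
          + (p x / 2) * ∑ i, ∑ j, pd i (fun y => K y j) x * pd j (fun y => K y i) x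
          + C₁ * p x)
    (huint0 : ∫ x, (∑ i, pd i (fun y => p y * u y i) x) = 0)
    (hKKint : Integrable (fun x => ∑ i, ∑ j, pd i (pd j (fun y => p y * K y i * K y j)) x))
    (hKKint0 : ∫ x, (∑ i, ∑ j, pd i (pd j (fun y => p y * K y i * K y j)) x) = 0) :
    C₁ = -hhat ^ 2 / 2 ∧
      ∀ x : Fin d → ℝ,
        (∑ i, pd i (fun y => p y * u y i) x)
          = (h x - hhat) * hhat * p x
            + (1 / 2) * ∑ i, ∑ j, pd i (pd j (fun y => p y * K y i * K y j)) x := by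
  have hdiv := fun x => sum_pd_mul_eq_of_gain_eq hp hK (hppos x).ne' (hKeq x) (hueq x)
  have hpInt : Integrable p := .of_integral_ne_zero (by simp [hpint])
  have hhpInt : Integrable (fun x => h x * p x) :=
    integrable_mul_of_integrable_sq_mul hpInt (fun x => (hppos x).le)
      (hh.mul hp.continuous).aestronglyMeasurable hh2
  have hcentered : Integrable (fun x => (h x - hhat) * p x) := by
    simp only [sub_mul]
    exact hhpInt.sub (hpInt.const_mul hhat)
  have hC₁ : C₁ + hhat ^ 2 / 2 = 0 := calc
    C₁ + hhat ^ 2 / 2 = ∫ x, ((h x - hhat) * p x * hhat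
        + 1 / 2 * ∑ i, ∑ j, pd i (pd j (fun y => p y * K y i * K y j)) x
        + (C₁ + hhat ^ 2 / 2) * p x) := by
      rw [integral_add ((hcentered.mul_const _).fun_add (hKKint.const_mul _)) (hpInt.const_mul _),
        integral_add (hcentered.mul_const _) (hKKint.const_mul _), integral_mul_const,
        integral_const_mul, integral_const_mul, hhat_def,
        integral_sub_integral_mul_mul_eq_zero hpint hhpInt, hKKint0, hpint]
      ring
    _ = 0 := by
      rw [← huint0]
      congr 1 with x
      rw [hdiv x]
      ring
  refine ⟨by linarith, fun x => ?_⟩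
  rw [hdiv x, hC₁]
  ring

/-- the control-input equation of Theorem 2 of the paper.
Let `p` be a C² probability density, `h` continuous with `∫ h² p < ∞`, `ĥ = ∫ h p`,
`K` C² satisfying the gain equation `div(pK) = −(h−ĥ)p`, and `u` C¹ satisfying the
once-integrated `O(Δt)` equation (46) with an undetermined constant `C₁`.  If
`div(pu)` and `∑_{i,j} ∂²_{ij}(pK_iK_j)` are integrable with vanishing integrals, then
`C₁ = −ĥ²/2` and `div(pu) = (h−ĥ)ĥp + (1/2)∑_{i,j} ∂²_{ij}(pK_iK_j)` everywhere. -/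
theorem stmt7 {d : ℕ}
    (p : (Fin d → ℝ) → ℝ) (hp : ContDiff ℝ 2 p) (hppos : ∀ x, 0 < p x)
    (hpint : ∫ x, p x = 1)
    (h : (Fin d → ℝ) → ℝ) (hh : Continuous h)
    (hh2 : Integrable (fun x => (h x) ^ 2 * p x))
    (hhat : ℝ) (hhat_def : hhat = ∫ x, h x * p x)
    (K : (Fin d → ℝ) → (Fin d → ℝ)) (hK : ContDiff ℝ 2 K)
    (hKeq : ∀ x : Fin d → ℝ,
      (∑ i, pd i (fun y => p y * K y i) x) = -(h x - hhat) * p x)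
    (u : (Fin d → ℝ) → (Fin d → ℝ)) (hu : ContDiff ℝ 1 u)
    (C₁ : ℝ)
    (hueq : ∀ x : Fin d → ℝ,
      (∑ i, pd i (fun y => p y * u y i) x)
        = (1 / 2) * (h x) ^ 2 * p x
          + (1 / 2) * ∑ i, ∑ j, K x i * K x j * pd i (pd j p) x
          - (p x / 2) * (∑ i, K x i * pd i (fun y => Real.log (p y)) x) ^ 2
          + p x * ∑ i, ∑ j, K x i * pd i (fun y => K y j) x * pd j (fun y => Real.log (p y)) x
          + p x * ∑ j, K x j * pd j (fun y => ∑ i, pd i (fun z => K z i) y) x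
          + (p x / 2) * ∑ i, ∑ j, pd i (fun y => K y j) x * pd j (fun y => K y i) x
          + C₁ * p x)
    (huint : Integrable (fun x => ∑ i, pd i (fun y => p y * u y i) x))
    (huint0 : ∫ x, (∑ i, pd i (fun y => p y * u y i) x) = 0)
    (hKKint : Integrable (fun x => ∑ i, ∑ j, pd i (pd j (fun y => p y * K y i * K y j)) x))
    (hKKint0 : ∫ x, (∑ i, ∑ j, pd i (pd j (fun y => p y * K y i * K y j)) x) = 0) :
    C₁ = -hhat ^ 2 / 2 ∧
      ∀ x : Fin d → ℝ,
        (∑ i, pd i (fun y => p y * u y i) x)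
          = (h x - hhat) * hhat * p x
            + (1 / 2) * ∑ i, ∑ j, pd i (pd j (fun y => p y * K y i * K y j)) x :=
  stmt7_general p hp hppos hpint h hh hh2 hhat hhat_def K hK hKeq u C₁ hueq huint0 hKKint hKKint0
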